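/- arXiv:1211.4215 — 2 statements merged into one kernel-verified Lean document; each statement's English description precedes it below -/
import Mathlib

section
/- The equation (x1^3+2x2^3+4x3^3+x1x2x3) + 7(x4^3+2x5^3+4x6^3+x4x5x6) + 49(x7^3+2x8^3+4x9^3+x7x8x9) = 0 has no solution in integers (x1,...,x9) other than x1 = x2 = ... = x9 = 0. -/
lemma key7 (x y z : ℤ) (h : (7:ℤ) ∣ x^3+2*y^3+4*z^3+x*y*z) :
    7 ∣ x ∧ 7 ∣ y ∧ 7 ∣ z := by
  have d : ∀ a b c : ZMod 7, a^3+2*b^3+4*c^3+a*b*c = 0 → a=0 ∧ b=0 ∧ c=0 := by decide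
  have h7 : ((x^3+2*y^3+4*z^3+x*y*z : ℤ) : ZMod 7) = 0 :=
    (ZMod.intCast_zmod_eq_zero_iff_dvd _ 7).mpr h
  push_cast at h7
  obtain ⟨hx, hy, hz⟩ := d x y z h7
  exact ⟨(ZMod.intCast_zmod_eq_zero_iff_dvd x 7).mp hx,
    (ZMod.intCast_zmod_eq_zero_iff_dvd y 7).mp hy,
    (ZMod.intCast_zmod_eq_zero_iff_dvd z 7).mp hz⟩


lemma sum9_eq_zero {A B C D E F G H I : ℕ} (h : A+B+C+D+E+F+G+H+I = 0) :
    A = 0 ∧ B = 0 ∧ C = 0 ∧ D = 0 ∧ E = 0 ∧ F = 0 ∧ G = 0 ∧ H = 0 ∧ I = 0 := by omega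

lemma lt_of_seven_mul_le {S n : ℕ} (h1 : 7 * S ≤ n) (h2 : 0 < S) : S < n := by omega

set_option maxHeartbeats 1000000 in
lemma aux7 : ∀ n : ℕ, ∀ x1 x2 x3 x4 x5 x6 x7 x8 x9 : ℤ,
    x1.natAbs + x2.natAbs + x3.natAbs + x4.natAbs + x5.natAbs + x6.natAbs
      + x7.natAbs + x8.natAbs + x9.natAbs ≤ n →
    (x1^3 + 2*x2^3 + 4*x3^3 + x1*x2*x3)
        + 7*(x4^3 + 2*x5^3 + 4*x6^3 + x4*x5*x6)
        + 49*(x7^3 + 2*x8^3 + 4*x9^3 + x7*x8*x9) = 0 →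
    x1 = 0 ∧ x2 = 0 ∧ x3 = 0 ∧ x4 = 0 ∧ x5 = 0 ∧ x6 = 0 ∧ x7 = 0 ∧ x8 = 0 ∧ x9 = 0 := by
  intro n
  induction n using Nat.strong_induction_on with
  | _ n ih =>
    intro x1 x2 x3 x4 x5 x6 x7 x8 x9 hle h
    -- step 1: 7 ∣ x1, x2, x3
    obtain ⟨⟨a, ha⟩, ⟨b, hb⟩, ⟨c, hc⟩⟩ := key7 x1 x2 x3
      ⟨-(x4^3 + 2*x5^3 + 4*x6^3 + x4*x5*x6) - 7*(x7^3 + 2*x8^3 + 4*x9^3 + x7*x8*x9),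
        by linarith⟩
    subst ha hb hc
    -- step 2: 7 ∣ x4, x5, x6
    obtain ⟨⟨d, hd⟩, ⟨e, he⟩, ⟨f, hf⟩⟩ := key7 x4 x5 x6
      ⟨-(7*(a^3 + 2*b^3 + 4*c^3 + a*b*c)) - (x7^3 + 2*x8^3 + 4*x9^3 + x7*x8*x9),
        mul_left_cancel₀ (by norm_num : (7:ℤ) ≠ 0) (by linear_combination h)⟩
    subst hd he hf
    -- step 3: 7 ∣ x7, x8, x9
    obtain ⟨⟨g, hg⟩, ⟨p, hp⟩, ⟨q, hq⟩⟩ := key7 x7 x8 x9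
      ⟨-(a^3 + 2*b^3 + 4*c^3 + a*b*c) - 7*(d^3 + 2*e^3 + 4*f^3 + d*e*f),
        mul_left_cancel₀ (by norm_num : (49:ℤ) ≠ 0) (by linear_combination h)⟩
    subst hg hp hq
    -- the descended equation
    have h' : (a^3 + 2*b^3 + 4*c^3 + a*b*c)
        + 7*(d^3 + 2*e^3 + 4*f^3 + d*e*f)
        + 49*(g^3 + 2*p^3 + 4*q^3 + g*p*q) = 0 :=
      mul_left_cancel₀ (by norm_num : (343:ℤ) ≠ 0) (by linear_combination h)
    have habs : (7*a).natAbs = 7 * a.natAbs := by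
      simpa using Int.natAbs_mul 7 a
    -- measure
    have h7S : 7 * (a.natAbs + b.natAbs + c.natAbs + d.natAbs + e.natAbs + f.natAbs
        + g.natAbs + p.natAbs + q.natAbs) ≤ n := by
      calc 7 * (a.natAbs + b.natAbs + c.natAbs + d.natAbs + e.natAbs + f.natAbs
            + g.natAbs + p.natAbs + q.natAbs)
          = (7*a).natAbs + (7*b).natAbs + (7*c).natAbs + (7*d).natAbs
          + (7*e).natAbs + (7*f).natAbs + (7*g).natAbs + (7*p).natAbs + (7*q).natAbs := by
            simp [Int.natAbs_mul]; ring
        _ ≤ n := hle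
    clear h hle habs
    rcases Nat.eq_zero_or_pos (a.natAbs + b.natAbs + c.natAbs + d.natAbs + e.natAbs
        + f.natAbs + g.natAbs + p.natAbs + q.natAbs) with hS0 | hSpos
    · obtain ⟨hA,hB,hC,hD,hE,hF,hG,hH,hI⟩ := sum9_eq_zero hS0
      rw [Int.natAbs_eq_zero] at hA hB hC hD hE hF hG hH hI
      subst hA hB hC hD hE hF hG hH hI
      norm_num
    · have hlt : a.natAbs + b.natAbs + c.natAbs + d.natAbs + e.natAbs + f.natAbs
          + g.natAbs + p.natAbs + q.natAbs < n := lt_of_seven_mul_le h7S hSpos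
      obtain ⟨ha, hb, hc, hd, he, hf, hg, hp, hq⟩ :=
        ih _ hlt a b c d e f g p q le_rfl h'
      subst ha hb hc hd he hf hg hp hq
      norm_num

theorem stmt_1 (x1 x2 x3 x4 x5 x6 x7 x8 x9 : ℤ)
    (h : (x1^3 + 2*x2^3 + 4*x3^3 + x1*x2*x3)
        + 7*(x4^3 + 2*x5^3 + 4*x6^3 + x4*x5*x6)
        + 49*(x7^3 + 2*x8^3 + 4*x9^3 + x7*x8*x9) = 0) :
    x1 = 0 ∧ x2 = 0 ∧ x3 = 0 ∧ x4 = 0 ∧ x5 = 0 ∧ x6 = 0 ∧ x7 = 0 ∧ x8 = 0 ∧ x9 = 0 := by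
  exact aux7 _ x1 x2 x3 x4 x5 x6 x7 x8 x9 le_rfl h
end

section
/- Let N(x,y,z) = x^3 + 2y^3 + 4z^3 + xyz. Then N does not represent zero nontrivially over the rationals: if r, s, t ∈ Q satisfy N(r,s,t) = 0 then r = s = t = 0. -/
lemma zmod7_aux : ∀ a b c : ZMod 7, a^3+2*b^3+4*c^3+a*b*c = 0 → a=0 ∧ b=0 ∧ c=0 := by decide

lemma int_descent : ∀ n : ℕ, ∀ x y z : ℤ, x.natAbs + y.natAbs + z.natAbs = n →
    x^3 + 2*y^3 + 4*z^3 + x*y*z = 0 → x = 0 ∧ y = 0 ∧ z = 0 := by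
  intro n
  induction n using Nat.strong_induction_on with
  | _ n ih =>
    intro x y z hsum heq
    rcases Nat.eq_zero_or_pos n with hn | hn
    · refine ⟨?_, ?_, ?_⟩ <;> [skip; skip; skip] <;>
      · rw [← Int.natAbs_eq_zero]; omega
    · have hmod : ((x : ZMod 7) = 0) ∧ ((y : ZMod 7) = 0) ∧ ((z : ZMod 7) = 0) := by
        apply zmod7_aux
        have : ((x^3 + 2*y^3 + 4*z^3 + x*y*z : ℤ) : ZMod 7) = 0 := by
          rw [heq]; simp
        push_cast at this
        linear_combination this
      have hx : (7:ℤ) ∣ x := (ZMod.intCast_zmod_eq_zero_iff_dvd x 7).mp hmod.1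
      have hy : (7:ℤ) ∣ y := (ZMod.intCast_zmod_eq_zero_iff_dvd y 7).mp hmod.2.1
      have hz : (7:ℤ) ∣ z := (ZMod.intCast_zmod_eq_zero_iff_dvd z 7).mp hmod.2.2
      obtain ⟨x1, rfl⟩ := hx
      obtain ⟨y1, rfl⟩ := hy
      obtain ⟨z1, rfl⟩ := hz
      have heq' : x1^3 + 2*y1^3 + 4*z1^3 + x1*y1*z1 = 0 := by linarith [heq]
      have hlt : x1.natAbs + y1.natAbs + z1.natAbs < n := by
        have h1 : (7*x1).natAbs = 7 * x1.natAbs := by simp [Int.natAbs_mul]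
        have h2 : (7*y1).natAbs = 7 * y1.natAbs := by simp [Int.natAbs_mul]
        have h3 : (7*z1).natAbs = 7 * z1.natAbs := by simp [Int.natAbs_mul]
        omega
      obtain ⟨hx1, hy1, hz1⟩ := ih _ hlt x1 y1 z1 rfl heq'
      exact ⟨by rw [hx1]; ring, by rw [hy1]; ring, by rw [hz1]; ring⟩

theorem stmt_19 (r s t : ℚ) (h : r^3 + 2*s^3 + 4*t^3 + r*s*t = 0) :
    r = 0 ∧ s = 0 ∧ t = 0 := by
  set n : ℤ := (r.den : ℤ) * s.den * t.den with hn
  have hnpos : 0 < n := by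
    rw [hn]
    positivity
  have hnne : (n : ℚ) ≠ 0 := by
    exact_mod_cast hnpos.ne'
  set a : ℤ := r.num * s.den * t.den with ha
  set b : ℤ := s.num * r.den * t.den with hb
  set c : ℤ := t.num * r.den * s.den with hc
  have hra : (a : ℚ) = r * n := by
    rw [ha, hn]; push_cast; rw [← Rat.mul_den_eq_num]; ring
  have hsb : (b : ℚ) = s * n := by
    rw [hb, hn]; push_cast; rw [← Rat.mul_den_eq_num]; ring
  have htc : (c : ℚ) = t * n := by
    rw [hc, hn]; push_cast; rw [← Rat.mul_den_eq_num]; ring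
  have key : (a:ℚ)^3 + 2*(b:ℚ)^3 + 4*(c:ℚ)^3 + a*b*c = 0 := by
    rw [hra, hsb, htc]
    have : (r*n)^3 + 2*(s*n)^3 + 4*(t*n)^3 + (r*n)*(s*n)*(t*n)
        = (r^3 + 2*s^3 + 4*t^3 + r*s*t) * n^3 := by ring
    rw [this, h, zero_mul]
  have keyZ : a^3 + 2*b^3 + 4*c^3 + a*b*c = 0 := by exact_mod_cast key
  obtain ⟨hA, hB, hC⟩ := int_descent _ a b c rfl keyZ
  have hr : r * n = 0 := by rw [← hra, hA]; simp
  have hs : s * n = 0 := by rw [← hsb, hB]; simp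
  have ht : t * n = 0 := by rw [← htc, hC]; simp
  exact ⟨by rcases mul_eq_zero.mp hr with h'|h'; exact h'; exact absurd h' hnne,
    by rcases mul_eq_zero.mp hs with h'|h'; exact h'; exact absurd h' hnne,
    by rcases mul_eq_zero.mp ht with h'|h'; exact h'; exact absurd h' hnne⟩
end
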